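/- Let λ, P, Q, Φ be dual numbers (with Q and sinh Φ invertible, i.e., with nonzero real parts) satisfying sinh Φ = −(1 + λP)·u and cosh Φ = −λQ·u where u = 1/sinh Φ, and −λτ = cosh Φ · u for a dual number τ. Then τ = −P/(λQ). -/

import Mathlib

/-!
Write `s = sinh Φ`, `c = cosh Φ`. Since `u = s⁻¹`, the hypotheses say `c s = -λQ`,
`s² = -(1 + λP)` and `-λτ s = c`, hence `λτ · λQ = c² = 1 + s² = -λP` by the dual
Pythagorean identity `cosh² Φ = 1 + sinh² Φ`, and cancelling `λ` gives `τ · λQ = -P`.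
Everything is invertible because `cosh Φ` has positive real part: if `s` were not a unit,
then `u = 0` and so `c = 0`; and `λQ = -c s` is then a unit too.
-/

open TrivSqZeroExt

/-- hyperbolic sine of a dual angle `Φ = φ + ε φ*`, given by `sinh φ + ε φ* cosh φ`. -/
noncomputable def dualSinh (Φ : DualNumber ℝ) : DualNumber ℝ :=
  inl (Real.sinh Φ.fst) + DualNumber.eps * inl (Φ.snd * Real.cosh Φ.fst)

/-- hyperbolic cosine of a dual angle `Φ = φ + ε φ*`, given by `cosh φ + ε φ* sinh φ`. -/
noncomputable def dualCosh (Φ : DualNumber ℝ) : DualNumber ℝ :=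
  inl (Real.cosh Φ.fst) + DualNumber.eps * inl (Φ.snd * Real.sinh Φ.fst)

@[simp] lemma fst_dualSinh (Φ : DualNumber ℝ) : (dualSinh Φ).fst = Real.sinh Φ.fst := by
  simp [dualSinh]

@[simp] lemma snd_dualSinh (Φ : DualNumber ℝ) : (dualSinh Φ).snd = Φ.snd * Real.cosh Φ.fst := by
  simp [dualSinh]

@[simp] lemma fst_dualCosh (Φ : DualNumber ℝ) : (dualCosh Φ).fst = Real.cosh Φ.fst := by
  simp [dualCosh]

@[simp] lemma snd_dualCosh (Φ : DualNumber ℝ) : (dualCosh Φ).snd = Φ.snd * Real.sinh Φ.fst := by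
  simp [dualCosh]

lemma isUnit_dualCosh (Φ : DualNumber ℝ) : IsUnit (dualCosh Φ) :=
  isUnit_iff_isUnit_fst.2 <| by simpa using (Real.cosh_pos Φ.fst).ne'

lemma dualCosh_mul_self (Φ : DualNumber ℝ) :
    dualCosh Φ * dualCosh Φ = 1 + dualSinh Φ * dualSinh Φ := by
  ext
  · simp only [fst_mul, fst_dualCosh, fst_add, fst_one, fst_dualSinh]
    linear_combination Real.cosh_sq Φ.fst
  · simp only [snd_mul, fst_dualCosh, snd_dualCosh, smul_eq_mul, MulOpposite.smul_eq_mul_unop,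
      MulOpposite.unop_op, snd_add, snd_one, fst_dualSinh, snd_dualSinh, zero_add]
    ring

theorem eq_neg_mul_inverse_of_pythagorean {R : Type*} [CommRing R] {s c u lam P Q τ : R}
    (hpyth : c * c = 1 + s * s) (hc : IsUnit c) (hu : u = Ring.inverse s)
    (h1 : s = -(1 + lam * P) * u) (h2 : c = -(lam * Q) * u) (h3 : -(lam * τ) = c * u) :
    τ = -(P * Ring.inverse (lam * Q)) := by
  have hs : IsUnit s := by
    by_contra hs
    rw [Ring.inverse_non_unit s hs] at hu
    rw [hu, mul_zero] at h2
    rw [h2, isUnit_zero_iff] at hc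
    have := subsingleton_of_zero_eq_one hc
    exact hs (isUnit_of_subsingleton s)
  have hus : u * s = 1 := hu ▸ Ring.inverse_mul_cancel s hs
  have hcs : c * s = -(lam * Q) := by linear_combination s * h2 - lam * Q * hus
  have hlamQ : IsUnit (lam * Q) := by simpa [hcs] using hc.mul hs
  have hss : s * s = -(1 + lam * P) := by linear_combination s * h1 - (1 + lam * P) * hus
  have hτs : -(lam * τ) * s = c := by linear_combination s * h3 + c * hus
  have hlam_cancel : lam * (τ * (lam * Q)) = lam * -P := by
    linear_combination lam * τ * hcs + c * hτs + hpyth + hss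
  rw [← neg_mul, Ring.eq_mul_inverse_iff_mul_eq _ _ _ hlamQ]
  exact (isUnit_of_mul_isUnit_left hlamQ).mul_left_cancel hlam_cancel

theorem stmt_9_general (Φ lam P Q τ u : DualNumber ℝ)
    (hu : u = Ring.inverse (dualSinh Φ))
    (h1 : dualSinh Φ = -(1 + lam * P) * u)
    (h2 : dualCosh Φ = -(lam * Q) * u)
    (h3 : -(lam * τ) = dualCosh Φ * u) :
    τ = -(P * Ring.inverse (lam * Q)) :=
  eq_neg_mul_inverse_of_pythagorean (dualCosh_mul_self Φ) (isUnit_dualCosh Φ) hu h1 h2 h3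

theorem stmt_9 (Φ lam P Q τ u : DualNumber ℝ)
    (hQ : Q.fst ≠ 0) (hS : (dualSinh Φ).fst ≠ 0)
    (hu : u = Ring.inverse (dualSinh Φ))
    (h1 : dualSinh Φ = -(1 + lam * P) * u)
    (h2 : dualCosh Φ = -(lam * Q) * u)
    (h3 : -(lam * τ) = dualCosh Φ * u) :
    τ = -(P * Ring.inverse (lam * Q)) :=
  stmt_9_general Φ lam P Q τ u hu h1 h2 h3
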